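/- Consider a k-layer width-n ReLU network with IID symmetric continuous parameters and an input set S₀ ⊆ ℝ^n with nonempty interior not containing only 0. Then P(n,k) ≥ (1 - 2^{-n})^k. -/

import Mathlib

open MeasureTheory
open scoped ENNReal

/-- Parameters of one width-n ReLU layer: a matrix (as `Fin n → Fin n → ℝ`) and a bias. -/
abbrev LayerParams (n : ℕ) := (Fin n → Fin n → ℝ) × (Fin n → ℝ)

/-- Pre-ReLU response of one layer. -/
def preact {n : ℕ} (p : LayerParams n) (y : Fin n → ℝ) : Fin n → ℝ :=
  fun i => (∑ j, p.1 i j * y j) + p.2 i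

/-- ReLU layer map. -/
def layerMap {n : ℕ} (p : LayerParams n) (y : Fin n → ℝ) : Fin n → ℝ :=
  fun i => max (preact p y i) 0

/-- Output of the first j layers of the network on input x. -/
def netOut {n : ℕ} (θ : ℕ → LayerParams n) (x : Fin n → ℝ) : ℕ → (Fin n → ℝ)
  | 0 => x
  | j + 1 => layerMap (θ j) (netOut θ x j)

/-- x survives layer j+1 iff some coordinate of the pre-activation is positive. -/
def survives {n : ℕ} (θ : ℕ → LayerParams n) (x : Fin n → ℝ) (k : ℕ) : Prop :=
  ∀ j < k, ∃ i : Fin n, 0 < preact (θ j) (netOut θ x j) i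

/-- Extend a finite family of layer parameters to all of ℕ (only indices < k matter). -/
def extParams {n k : ℕ} (θ : Fin k → LayerParams n) : ℕ → LayerParams n :=
  fun j => if h : j < k then θ ⟨j, h⟩ else default

/-- IID parameter measure for a k-layer width-n network, each scalar drawn from ρ. -/
noncomputable def netMeasure (n k : ℕ) (ρ : Measure ℝ) : Measure (Fin k → LayerParams n) :=
  Measure.pi fun _ : Fin k =>
    (Measure.pi fun _ : Fin n => Measure.pi fun _ : Fin n => ρ).prod
      (Measure.pi fun _ : Fin n => ρ)

/-! The network is alive on `S₀` as soon as it is alive at one point `x` of `S₀`. Given the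
output `y` of the first layers at `x`, the next layer kills `x` exactly when all `n` forms
`w_i ⬝ y + b_i` are `≤ 0`. Each form is odd in its parameters `(w_i, b_i)` and vanishes only
on a null set (the bias is atomless), so it is `≤ 0` with probability exactly `1/2`,
independently over the rows. Conditioning on the first layers, `x` survives all `k` layers with
probability exactly `(1 - 2^{-n})^k`. -/

open Set

theorem MeasureTheory.MeasurePreserving.measure_setOf_nonpos_eq_half {Ω : Type*}
    [MeasurableSpace Ω] {μ : Measure Ω} [IsProbabilityMeasure μ] {σ : Ω → Ω}
    (hσ : MeasurePreserving σ μ μ) {X : Ω → ℝ} (hX : Measurable X)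
    (hodd : ∀ ω, X (σ ω) = -X ω) (hzero : μ (X ⁻¹' {0}) = 0) :
    μ {ω | X ω ≤ 0} = 2⁻¹ := by
  have hnonneg : MeasurableSet {ω | 0 ≤ X ω} := measurableSet_le measurable_const hX
  have hflip : μ {ω | 0 ≤ X ω} = μ {ω | X ω ≤ 0} := by
    rw [← hσ.measure_preimage (measurableSet_le hX measurable_const).nullMeasurableSet]
    congr 1
    ext ω
    simp [hodd]
  have hunion : {ω | X ω ≤ 0} ∪ {ω | 0 ≤ X ω} = univ := by
    ext ω; simp [le_total]
  have hinter : {ω | X ω ≤ 0} ∩ {ω | 0 ≤ X ω} = X ⁻¹' {0} := by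
    ext ω; simp [le_antisymm_iff]
  have hcover := measure_union_add_inter (μ := μ) {ω | X ω ≤ 0} hnonneg
  rw [hunion, hinter, hzero, hflip, measure_univ, add_zero, ← two_mul] at hcover
  exact ENNReal.eq_inv_of_mul_eq_one_left (by rw [mul_comm, hcover])

theorem MeasureTheory.Measure.prod_setOf_and_mem {α β : Type*} [MeasurableSpace α]
    [MeasurableSpace β] {μ : Measure α} {ν : Measure β} [SFinite μ] [SFinite ν]
    {A : Set β} {B : β → Set α}
    (hA : MeasurableSet A) (hE : MeasurableSet {q : α × β | q.2 ∈ A ∧ q.1 ∈ B q.2})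
    {c : ℝ≥0∞} (hB : ∀ b ∈ A, μ (B b) = c) :
    μ.prod ν {q : α × β | q.2 ∈ A ∧ q.1 ∈ B q.2} = c * ν A := by
  rw [Measure.prod_apply_symm hE, ← lintegral_indicator_const hA]
  refine lintegral_congr fun b => ?_
  by_cases hb : b ∈ A
  · simp [hb, hB b hb]
  · simp [hb]

noncomputable def layerMeasure (n : ℕ) (ρ : Measure ℝ) : Measure (LayerParams n) :=
  (Measure.pi fun _ : Fin n => Measure.pi fun _ : Fin n => ρ).prod
    (Measure.pi fun _ : Fin n => ρ)

theorem netMeasure_eq_pi (n k : ℕ) (ρ : Measure ℝ) :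
    netMeasure n k ρ = Measure.pi fun _ : Fin k => layerMeasure n ρ := rfl

instance (n : ℕ) (ρ : Measure ℝ) [IsProbabilityMeasure ρ] :
    IsProbabilityMeasure (layerMeasure n ρ) := by
  unfold layerMeasure; infer_instance

section Layer

variable {n : ℕ} {ρ : Measure ℝ}

theorem measure_affine_nonpos_eq_half [IsProbabilityMeasure ρ]
    (hsym : ρ.map (fun t => -t) = ρ) (hcont : ∀ c : ℝ, ρ {c} = 0) (y : Fin n → ℝ) :
    ((Measure.pi fun _ : Fin n => ρ).prod ρ)
      {q : (Fin n → ℝ) × ℝ | (∑ j, q.1 j * y j) + q.2 ≤ 0} = 2⁻¹ := by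
  have hneg : MeasurePreserving (fun t : ℝ => -t) ρ ρ := ⟨measurable_neg, hsym⟩
  have hX : Measurable fun q : (Fin n → ℝ) × ℝ => (∑ j, q.1 j * y j) + q.2 := by fun_prop
  refine ((measurePreserving_pi _ _ fun _ => hneg).prod hneg).measure_setOf_nonpos_eq_half hX
    (fun q => ?_) ?_
  · simp only [Prod.map_fst, Prod.map_snd, neg_mul, Finset.sum_neg_distrib, neg_add]
  · rw [Measure.measure_prod_null (hX (measurableSet_singleton 0))]
    refine Filter.Eventually.of_forall fun a => ?_
    have hfiber :
        Prod.mk a ⁻¹' ((fun q : (Fin n → ℝ) × ℝ => (∑ j, q.1 j * y j) + q.2) ⁻¹' {0}) =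
          {-∑ j, a j * y j} := by
      ext t; simp [eq_neg_iff_add_eq_zero, add_comm]
    simp [hfiber, hcont]

theorem continuous_preact :
    Continuous fun q : LayerParams n × (Fin n → ℝ) => preact q.1 q.2 := by
  unfold preact; fun_prop

theorem isOpen_setOf_exists_preact_pos {X : Type*} [TopologicalSpace X]
    {p : X → LayerParams n} {y : X → Fin n → ℝ} (hp : Continuous p) (hy : Continuous y) :
    IsOpen {z | ∃ i, 0 < preact (p z) (y z) i} := by
  simp only [ofPred_exists]
  exact isOpen_iUnion fun i => isOpen_lt continuous_const
    ((continuous_apply i).comp (continuous_preact.comp (hp.prodMk hy)))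

theorem layerMeasure_setOf_forall_preact_nonpos [IsProbabilityMeasure ρ]
    (hsym : ρ.map (fun t => -t) = ρ) (hcont : ∀ c : ℝ, ρ {c} = 0) (y : Fin n → ℝ) :
    layerMeasure n ρ {p | ∀ i, preact p y i ≤ 0} = 2⁻¹ ^ n := by
  have hrows := measurePreserving_arrowProdEquivProdArrow (Fin n → ℝ) ℝ (Fin n)
    (fun _ => Measure.pi fun _ : Fin n => ρ) (fun _ => ρ)
  have hdead : MeasurableSet {p : LayerParams n | ∀ i, preact p y i ≤ 0} :=
    (isClosed_le (continuous_preact.comp (continuous_id.prodMk continuous_const))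
      continuous_const).measurableSet
  have hbox : (MeasurableEquiv.arrowProdEquivProdArrow (Fin n → ℝ) ℝ (Fin n)) ⁻¹'
      {p : LayerParams n | ∀ i, preact p y i ≤ 0} =
      univ.pi fun _ => {q : (Fin n → ℝ) × ℝ | (∑ j, q.1 j * y j) + q.2 ≤ 0} := by
    ext g
    simp [MeasurableEquiv.arrowProdEquivProdArrow, Equiv.arrowProdEquivProdArrow, preact]
  rw [layerMeasure, ← hrows.measure_preimage hdead.nullMeasurableSet, hbox, Measure.pi_pi]
  simp [measure_affine_nonpos_eq_half hsym hcont y]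

theorem layerMeasure_setOf_exists_preact_pos [IsProbabilityMeasure ρ]
    (hsym : ρ.map (fun t => -t) = ρ) (hcont : ∀ c : ℝ, ρ {c} = 0) (y : Fin n → ℝ) :
    layerMeasure n ρ {p | ∃ i, 0 < preact p y i} = 1 - 2⁻¹ ^ n := by
  have hopen : IsOpen {p : LayerParams n | ∃ i, 0 < preact p y i} :=
    isOpen_setOf_exists_preact_pos continuous_id continuous_const
  have hdead : {p | ∀ i, preact p y i ≤ 0} = {p | ∃ i, 0 < preact p y i}ᶜ := by
    ext p; simp
  rw [← layerMeasure_setOf_forall_preact_nonpos hsym hcont y, hdead,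
    prob_compl_eq_one_sub hopen.measurableSet,
    ENNReal.sub_sub_cancel ENNReal.one_ne_top prob_le_one]

end Layer

section Network

variable {n : ℕ} {ρ : Measure ℝ}

theorem netOut_congr {θ₁ θ₂ : ℕ → LayerParams n} (x : Fin n → ℝ) {j : ℕ}
    (h : ∀ m < j, θ₁ m = θ₂ m) : netOut θ₁ x j = netOut θ₂ x j := by
  induction j with
  | zero => rfl
  | succ j ih => rw [netOut, netOut, ih fun m hm => h m (by omega), h j j.lt_succ_self]

theorem survives_succ {θ : ℕ → LayerParams n} {x : Fin n → ℝ} {k : ℕ} :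
    survives θ x (k + 1) ↔ survives θ x k ∧ ∃ i, 0 < preact (θ k) (netOut θ x k) i :=
  Nat.forall_lt_succ_right

theorem survives_congr {θ₁ θ₂ : ℕ → LayerParams n} (x : Fin n → ℝ) {k : ℕ}
    (h : ∀ m < k, θ₁ m = θ₂ m) : survives θ₁ x k ↔ survives θ₂ x k := by
  refine forall₂_congr fun j hj => ?_
  rw [h j hj, netOut_congr x fun m hm => h m (hm.trans hj)]

theorem extParams_init {k : ℕ} (θ : Fin (k + 1) → LayerParams n) {m : ℕ} (hm : m < k) :
    extParams (Fin.init θ) m = extParams θ m := by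
  simp [extParams, hm, hm.trans k.lt_succ_self, Fin.init]

theorem extParams_last {k : ℕ} (θ : Fin (k + 1) → LayerParams n) :
    extParams θ k = θ (Fin.last k) := by
  simp [extParams, Fin.last]

theorem survives_extParams_succ {k : ℕ} (θ : Fin (k + 1) → LayerParams n) (x : Fin n → ℝ) :
    survives (extParams θ) x (k + 1) ↔ survives (extParams (Fin.init θ)) x k ∧
      ∃ i, 0 < preact (θ (Fin.last k)) (netOut (extParams (Fin.init θ)) x k) i := by
  have h : ∀ m < k, extParams (Fin.init θ) m = extParams θ m := fun m hm => extParams_init θ hm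
  rw [survives_succ, survives_congr x h, netOut_congr x h, extParams_last]

theorem continuous_extParams {k : ℕ} (j : ℕ) :
    Continuous fun θ : Fin k → LayerParams n => extParams θ j := by
  by_cases h : j < k
  · simp only [extParams, dif_pos h]; exact continuous_apply _
  · simp only [extParams, dif_neg h]; exact continuous_const

theorem continuous_netOut_extParams {k : ℕ} (x : Fin n → ℝ) (j : ℕ) :
    Continuous fun θ : Fin k → LayerParams n => netOut (extParams θ) x j := by
  induction j with
  | zero => exact continuous_const
  | succ j ih =>
    have hlayer : Continuous fun q : LayerParams n × (Fin n → ℝ) => layerMap q.1 q.2 :=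
      continuous_pi fun i => ((continuous_apply i).comp continuous_preact).max continuous_const
    exact hlayer.comp ((continuous_extParams j).prodMk ih)

theorem isOpen_setOf_survives {k : ℕ} (x : Fin n → ℝ) (m : ℕ) :
    IsOpen {θ : Fin k → LayerParams n | survives (extParams θ) x m} := by
  induction m with
  | zero => simp [survives]
  | succ m ih =>
    simp only [survives_succ, ofPred_and]
    exact ih.inter (isOpen_setOf_exists_preact_pos (continuous_extParams m)
      (continuous_netOut_extParams x m))

theorem netMeasure_setOf_survives [IsProbabilityMeasure ρ]
    (hsym : ρ.map (fun t => -t) = ρ) (hcont : ∀ c : ℝ, ρ {c} = 0)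
    (x : Fin n → ℝ) (k : ℕ) :
    netMeasure n k ρ {θ | survives (extParams θ) x k} = (1 - 2⁻¹ ^ n) ^ k := by
  induction k with
  | zero => simp [survives, netMeasure_eq_pi]
  | succ k ih =>
    set A := {θ : Fin k → LayerParams n | survives (extParams θ) x k}
    set B := fun θ : Fin k → LayerParams n =>
      {p | ∃ i, 0 < preact p (netOut (extParams θ) x k) i}
    set E := {q : LayerParams n × (Fin k → LayerParams n) | q.2 ∈ A ∧ q.1 ∈ B q.2}
    have hA : IsOpen A := isOpen_setOf_survives x k
    have hE : IsOpen E := (hA.preimage continuous_snd).inter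
      (isOpen_setOf_exists_preact_pos continuous_fst
        ((continuous_netOut_extParams x k).comp continuous_snd))
    have hsplit := measurePreserving_piFinSuccAbove
      (fun _ : Fin (k + 1) => layerMeasure n ρ) (Fin.last k)
    have hpre : {θ : Fin (k + 1) → LayerParams n | survives (extParams θ) x (k + 1)} =
        MeasurableEquiv.piFinSuccAbove (fun _ => LayerParams n) (Fin.last k) ⁻¹' E := by
      ext θ
      simp [survives_extParams_succ, A, E, B, MeasurableEquiv.piFinSuccAbove_apply]
    rw [netMeasure_eq_pi, hpre, hsplit.measure_preimage hE.measurableSet.nullMeasurableSet,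
      Measure.prod_setOf_and_mem hA.measurableSet hE.measurableSet
        fun θ _ => layerMeasure_setOf_exists_preact_pos hsym hcont _,
      ← netMeasure_eq_pi, ih, pow_succ, mul_comm]

end Network

theorem network_alive_lower_bound_general (n k : ℕ) (ρ : Measure ℝ) [IsProbabilityMeasure ρ]
    (hsym : ρ.map (fun t => -t) = ρ) (hcont : ∀ c : ℝ, ρ {c} = 0)
    (S₀ : Set (Fin n → ℝ)) (hS : (interior S₀).Nonempty) :
    (1 - (2 : ℝ≥0∞)⁻¹ ^ n) ^ k ≤
      netMeasure n k ρ {θ | ∃ x ∈ S₀, survives (extParams θ) x k} := by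
  obtain ⟨x, hx⟩ := hS
  calc (1 - (2 : ℝ≥0∞)⁻¹ ^ n) ^ k
      = netMeasure n k ρ {θ | survives (extParams θ) x k} :=
        (netMeasure_setOf_survives hsym hcont x k).symm
    _ ≤ netMeasure n k ρ {θ | ∃ x ∈ S₀, survives (extParams θ) x k} :=
        measure_mono fun θ hθ => ⟨x, interior_subset hx, hθ⟩

/-- Lower bound: for a k-layer width-n ReLU network with all parameters IID from a
symmetric atomless (continuous) distribution, and an input set S₀ with nonempty
interior (hence containing a nonzero point), the probability that the network is
alive on S₀ is at least (1 - 2^{-n})^k. -/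
theorem network_alive_lower_bound (n k : ℕ) (ρ : Measure ℝ) [IsProbabilityMeasure ρ]
    (hsym : ρ.map (fun t => -t) = ρ) (hcont : ∀ c : ℝ, ρ {c} = 0)
    (S₀ : Set (Fin n → ℝ)) (hS : (interior S₀).Nonempty) (hS0 : S₀ ≠ {0}) :
    (1 - (2 : ℝ≥0∞)⁻¹ ^ n) ^ k ≤
      netMeasure n k ρ {θ | ∃ x ∈ S₀, survives (extParams θ) x k} :=
  network_alive_lower_bound_general n k ρ hsym hcont S₀ hS
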